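/- arXiv:1208.0870 — 4 statements merged into one kernel-verified Lean document; each statement's English description precedes it below -/
import Mathlib

section
/- Let Γ_1, …, Γ_m be i.i.d. random variables with the geometric distribution P(Γ_i = j) = (1-r) r^{j-1} for j ≥ 1, where 0 < r < 1. Let p_m be the probability that the multiset {Γ_1,…,Γ_m} is gap-free, i.e., contains every integer between 1 and max_i Γ_i. Then p_m satisfies the recursion p_0 = 1 and p_m = ∑_{k=0}^{m-1} p_k · C(m,k) · r^k · (1-r)^{m-k} for m > 0. -/
/-!
Shift every value down by one. The tuple is then gap-free iff its range is a lower set of `ℕ`,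
and by independence each tuple `a` has probability `∏ i, W * R ^ a i` with `W = 1 - r`, `R = r`.
Split the tuples by the set `S` of coordinates with nonzero value, and subtract one more on `S`.
This gives a bijection from the gap-free tuples with `S ≠ univ` onto the gap-free tuples
indexed by `S`, and it divides the weight by `R ^ #S * W ^ (m - #S)`. If `S = univ` the value `0`
is missing, so no tuple is gap-free. Summing over `S` with `#S = k` gives the factor `m.choose k`.
-/

open MeasureTheory Finset ProbabilityTheory

open scoped ENNReal

theorem tsum_eq_tsum_succ {ι : Type*} {f : (ι → ℕ) → ℝ≥0∞}
    (hf : ∀ a i, a i = 0 → f a = 0) : ∑' a, f a = ∑' a : ι → ℕ, f (fun i => a i + 1) := by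
  refine (Function.Injective.tsum_eq (fun a b h => ?_) fun a ha => ?_).symm
  · funext i
    simpa using congrFun h i
  · refine ⟨fun i => a i - 1, funext fun i => Nat.sub_add_cancel ?_⟩
    exact Nat.one_le_iff_ne_zero.2 fun hi => ha (hf a i hi)

theorem measure_preimage_eq_tsum_indicator_prod {Ω ι : Type*} [MeasurableSpace Ω]
    {μ : Measure Ω} [IsProbabilityMeasure μ] [Fintype ι] {X : ι → Ω → ℕ}
    (hX : ∀ i, Measurable (X i)) (hindep : iIndepFun X μ) (A : Set (ι → ℕ)) :
    μ ((fun ω i => X i ω) ⁻¹' A) =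
      ∑' a, A.indicator (fun a => ∏ i, μ (X i ⁻¹' {a i})) a := by
  have hA : MeasurableSet A := A.to_countable.measurableSet
  rw [← Measure.map_apply (measurable_pi_lambda _ hX) hA,
    (iIndepFun_iff_map_fun_eq_pi_map fun i => (hX i).aemeasurable).1 hindep,
    ← Measure.tsum_indicator_apply_singleton _ _ hA]
  simp [Measure.map_apply (hX _) (measurableSet_singleton _)]

theorem forall_Icc_sup_iff {ι : Type*} (t : Finset ι) (a : ι → ℕ) :
    (∀ j ∈ Icc 1 (t.sup a), ∃ i ∈ t, a i = j) ↔
      ∀ i ∈ t, ∀ j ∈ Icc 1 (a i), ∃ k ∈ t, a k = j := by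
  constructor
  · intro h i hi j hj
    exact h j (mem_Icc.2 ⟨(mem_Icc.1 hj).1, (mem_Icc.1 hj).2.trans (le_sup hi)⟩)
  · intro h j hj
    obtain ⟨hj1, hjs⟩ := mem_Icc.1 hj
    obtain ⟨i, hi, hji⟩ := (Finset.le_sup_iff (Nat.bot_eq_zero ▸ hj1)).1 hjs
    exact h i hi j (mem_Icc.2 ⟨hj1, hji⟩)

theorem forall_Icc_succ_iff_isLowerSet_range {ι : Type*} (a : ι → ℕ) :
    (∀ i, ∀ j ∈ Icc 1 (a i + 1), ∃ k, a k + 1 = j) ↔ IsLowerSet (Set.range a) := by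
  constructor
  · rintro h _ j hj ⟨i, rfl⟩
    obtain ⟨k, hk⟩ := h i (j + 1) (mem_Icc.2 ⟨by omega, by omega⟩)
    exact ⟨k, by omega⟩
  · intro h i j hj
    rw [mem_Icc] at hj
    obtain ⟨k, hk⟩ := h (show j - 1 ≤ a i by omega) (Set.mem_range_self i)
    exact ⟨k, by omega⟩

namespace GapFree

section Weight

variable (W R : ℝ≥0∞) {ι : Type*} [Fintype ι]

noncomputable def gapFreeWeight (a : ι → ℕ) : ℝ≥0∞ :=
  {a : ι → ℕ | IsLowerSet (Set.range a)}.indicator (fun a => ∏ i, W * R ^ a i) a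

variable (ι) in
noncomputable def gapFreeMass : ℝ≥0∞ :=
  ∑' a : ι → ℕ, gapFreeWeight W R a

theorem gapFreeMass_congr {κ : Type*} [Fintype κ] (e : ι ≃ κ) :
    gapFreeMass W R ι = gapFreeMass W R κ := by
  classical
  rw [gapFreeMass, gapFreeMass, ← (e.arrowCongr (Equiv.refl ℕ)).tsum_eq]
  refine tsum_congr fun a => ?_
  have hrange : Set.range (e.arrowCongr (Equiv.refl ℕ) a) = Set.range a :=
    e.symm.surjective.range_comp a
  simp only [gapFreeWeight, Set.indicator_apply, Set.mem_ofPred_eq, hrange]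
  congr 1
  exact (e.symm.prod_comp fun i => W * R ^ a i).symm

theorem measure_gapFree_eq_gapFreeMass {Ω : Type*} [MeasurableSpace Ω] {μ : Measure Ω}
    [IsProbabilityMeasure μ] {X : ι → Ω → ℕ} (hX : ∀ i, Measurable (X i))
    (hindep : iIndepFun X μ) (hzero : ∀ i, μ (X i ⁻¹' {0}) = 0)
    (hsucc : ∀ i j, μ (X i ⁻¹' {j + 1}) = W * R ^ j) :
    μ {ω | ∀ i, ∀ j ∈ Icc 1 (X i ω), ∃ k, X k ω = j} = gapFreeMass W R ι := by
  classical
  rw [show {ω | ∀ i, ∀ j ∈ Icc 1 (X i ω), ∃ k, X k ω = j} =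
      (fun ω i => X i ω) ⁻¹' {a | ∀ i, ∀ j ∈ Icc 1 (a i), ∃ k, a k = j} from rfl,
    measure_preimage_eq_tsum_indicator_prod hX hindep, tsum_eq_tsum_succ, gapFreeMass]
  · refine tsum_congr fun a => ?_
    simp only [gapFreeWeight, Set.indicator_apply, Set.mem_ofPred_eq, hsucc,
      forall_Icc_succ_iff_isLowerSet_range]
  · intro a i hi
    exact Set.indicator_apply_eq_zero.2 fun _ => prod_eq_zero (mem_univ i) (by rw [hi, hzero])

end Weight

section Recursion

variable {ι : Type*} [DecidableEq ι]

def succOn (S : Finset ι) (b : S → ℕ) (i : ι) : ℕ :=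
  if h : i ∈ S then b ⟨i, h⟩ + 1 else 0

@[simp]
theorem succOn_coe (S : Finset ι) (b : S → ℕ) (x : S) : succOn S b x = b x + 1 := by
  simp [succOn]

theorem succOn_of_notMem {S : Finset ι} (b : S → ℕ) {i : ι} (hi : i ∉ S) :
    succOn S b i = 0 := by
  simp [succOn, hi]

theorem mem_of_succOn_ne_zero {S : Finset ι} {b : S → ℕ} {i : ι} (hi : succOn S b i ≠ 0) :
    i ∈ S := by
  by_contra h
  exact hi (succOn_of_notMem b h)

variable [Fintype ι]

def supportFiberEquiv (S : Finset ι) :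
    {a : ι → ℕ // ({i | a i ≠ 0} : Finset ι) = S} ≃ (S → ℕ) where
  toFun a x := a.1 x - 1
  invFun b := ⟨succOn S b, by ext i; by_cases h : i ∈ S <;> simp [succOn, h]⟩
  left_inv := by
    rintro ⟨a, rfl⟩
    ext i
    by_cases h : a i = 0 <;> simp [succOn, h]
    omega
  right_inv b := by
    funext x
    simp

theorem tsum_eq_sum_tsum_succOn (f : (ι → ℕ) → ℝ≥0∞) :
    ∑' a, f a = ∑ S : Finset ι, ∑' b : S → ℕ, f (succOn S b) := by
  rw [← (Equiv.sigmaFiberEquiv fun a : ι → ℕ => ({i | a i ≠ 0} : Finset ι)).tsum_eq,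
    ENNReal.tsum_sigma', tsum_fintype]
  exact sum_congr rfl fun S _ => ((supportFiberEquiv S).symm.tsum_eq fun a => f a.1).symm

theorem isLowerSet_range_succOn_iff [Nonempty ι] (S : Finset ι) (b : S → ℕ) :
    IsLowerSet (Set.range (succOn S b)) ↔ S ≠ univ ∧ IsLowerSet (Set.range b) := by
  constructor
  · intro h
    refine ⟨fun hS => ?_, ?_⟩
    · obtain ⟨i, hi⟩ := h (Nat.zero_le _) (Set.mem_range_self (Classical.arbitrary ι))
      have hiS : i ∈ S := hS ▸ mem_univ i
      simp [succOn, hiS] at hi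
    · rintro _ j hj ⟨x, rfl⟩
      obtain ⟨i, hi⟩ := h (Nat.succ_le_succ hj) ⟨x, succOn_coe S b x⟩
      have hiS := mem_of_succOn_ne_zero (hi ▸ j.succ_ne_zero)
      exact ⟨⟨i, hiS⟩, by simpa [succOn, hiS] using hi⟩
  · rintro ⟨hS, hb⟩ _ j hj ⟨i, rfl⟩
    cases j with
    | zero =>
      obtain ⟨i₀, hi₀⟩ : ∃ i, i ∉ S := by simpa [eq_univ_iff_forall] using hS
      exact ⟨i₀, succOn_of_notMem b hi₀⟩
    | succ j =>
      have hiS := mem_of_succOn_ne_zero (by omega : succOn S b i ≠ 0)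
      obtain ⟨x, hx⟩ := hb (by simpa [succOn, hiS] using hj) (Set.mem_range_self ⟨i, hiS⟩)
      exact ⟨x, by simp [hx]⟩

variable (W R : ℝ≥0∞)

theorem prod_succOn (S : Finset ι) (b : S → ℕ) :
    ∏ i, W * R ^ succOn S b i = R ^ #S * W ^ (Fintype.card ι - #S) * ∏ x : S, W * R ^ b x := by
  have hS : ∏ i ∈ S, W * R ^ succOn S b i = R ^ #S * ∏ x : S, W * R ^ b x := by
    rw [← prod_coe_sort S]
    simp only [succOn_coe, pow_succ', mul_left_comm W R, prod_mul_distrib, prod_const,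
      card_univ, Fintype.card_coe]
  have hSc : ∏ i ∈ Sᶜ, W * R ^ succOn S b i = W ^ (Fintype.card ι - #S) := by
    rw [prod_congr rfl fun i hi => by rw [succOn_of_notMem b (mem_compl.1 hi), pow_zero, mul_one],
      prod_const, card_compl]
  rw [← prod_mul_prod_compl S, hS, hSc]
  ring

theorem gapFreeWeight_succOn_univ [Nonempty ι] (b : ↥(univ : Finset ι) → ℕ) :
    gapFreeWeight W R (succOn univ b) = 0 := by
  simp [gapFreeWeight, isLowerSet_range_succOn_iff]

theorem tsum_gapFreeWeight_succOn [Nonempty ι] {S : Finset ι} (hS : S ≠ univ) :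
    ∑' b : S → ℕ, gapFreeWeight W R (succOn S b) =
      gapFreeMass W R (Fin #S) * R ^ #S * W ^ (Fintype.card ι - #S) := by
  classical
  rw [← gapFreeMass_congr W R S.equivFin, gapFreeMass, mul_assoc, ← ENNReal.tsum_mul_right]
  refine tsum_congr fun b => ?_
  simp only [gapFreeWeight, Set.indicator_apply, Set.mem_ofPred_eq, isLowerSet_range_succOn_iff,
    hS, ne_eq, not_false_eq_true, true_and, prod_succOn]
  split_ifs
  · ring
  · simp

theorem gapFreeMass_eq_sum [Nonempty ι] :
    gapFreeMass W R ι = ∑ k ∈ range (Fintype.card ι),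
      gapFreeMass W R (Fin k) * (Fintype.card ι).choose k * R ^ k * W ^ (Fintype.card ι - k) := by
  set n := Fintype.card ι with hn
  let g : ℕ → ℝ≥0∞ := fun k => if k = n then 0 else gapFreeMass W R (Fin k) * R ^ k * W ^ (n - k)
  have hg (S : Finset ι) : ∑' b : S → ℕ, gapFreeWeight W R (succOn S b) = g #S := by
    by_cases hS : S = univ
    · subst hS
      simp [g, n, gapFreeWeight_succOn_univ]
    · simp only [g, card_eq_iff_eq_univ, hS, if_false, tsum_gapFreeWeight_succOn W R hS, n]
  calc gapFreeMass W R ι = ∑ S ∈ (univ : Finset ι).powerset, g #S := by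
        rw [gapFreeMass, tsum_eq_sum_tsum_succOn, powerset_univ]
        exact sum_congr rfl fun S _ => hg S
    _ = ∑ k ∈ range n, n.choose k • g k := by
        rw [sum_powerset_apply_card, card_univ, ← hn, sum_range_succ]
        simp [g]
    _ = _ := by
        refine sum_congr rfl fun k hk => ?_
        simp only [g, (mem_range.1 hk).ne, if_false, nsmul_eq_mul]
        ring

end Recursion

end GapFree

/-- for i.i.d. geometric random variables `Γ i` with
`P(Γ i = j) = (1-r) r^(j-1)` for `j ≥ 1`, the probability `p m` that the first
`m` values are gap free (contain every integer between `1` and their maximum)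
satisfies `p 0 = 1` and the recursion
`p m = ∑_{k<m} p k * C(m,k) * r^k * (1-r)^(m-k)`. -/
theorem stmt3 {Ω : Type*} [MeasurableSpace Ω] (μ : Measure Ω) [IsProbabilityMeasure μ]
    (r : ℝ) (hr0 : 0 < r) (hr1 : r < 1)
    (Γ : ℕ → Ω → ℕ) (hmeas : ∀ i, Measurable (Γ i))
    (hindep : iIndepFun Γ μ)
    (hdist : ∀ i j, 1 ≤ j → μ {ω | Γ i ω = j} = ENNReal.ofReal ((1 - r) * r ^ (j - 1)))
    (hzero : ∀ i, μ {ω | Γ i ω = 0} = 0)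
    (p : ℕ → ℝ)
    (hp : ∀ m : ℕ, p m =
      (μ {ω | ∀ j ∈ Finset.Icc 1 ((Finset.range m).sup fun i => Γ i ω),
          ∃ i ∈ Finset.range m, Γ i ω = j}).toReal) :
    p 0 = 1 ∧
    ∀ m : ℕ, 0 < m →
      p m = ∑ k ∈ Finset.range m,
        p k * (m.choose k : ℝ) * r ^ k * (1 - r) ^ (m - k) := by
  have hmass (m : ℕ) : μ {ω | ∀ j ∈ Icc 1 ((range m).sup fun i => Γ i ω),
      ∃ i ∈ range m, Γ i ω = j} =
      GapFree.gapFreeMass (ENNReal.ofReal (1 - r)) (ENNReal.ofReal r) (Fin m) := by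
    rw [← GapFree.measure_gapFree_eq_gapFreeMass _ _ (X := fun i : Fin m => Γ i)
      (fun i => hmeas i) (hindep.precomp Fin.val_injective) (fun i => hzero i) fun i j => ?_]
    · congr 1
      ext ω
      rw [Set.mem_ofPred_eq, forall_Icc_sup_iff]
      simp [Fin.forall_iff, Fin.exists_iff]
    · rw [← ENNReal.ofReal_pow hr0.le, ← ENNReal.ofReal_mul (by linarith)]
      exact hdist i (j + 1) (by omega)
  have hp' (m : ℕ) :
      p m = (GapFree.gapFreeMass (ENNReal.ofReal (1 - r)) (ENNReal.ofReal r) (Fin m)).toReal := by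
    rw [hp, hmass]
  refine ⟨by simp [hp], fun m hm => ?_⟩
  have : Nonempty (Fin m) := ⟨⟨0, hm⟩⟩
  rw [hp', GapFree.gapFreeMass_eq_sum, Fintype.card_fin,
    ENNReal.toReal_sum fun k _ => by have := hmass k ▸ measure_ne_top μ _; finiteness]
  refine sum_congr rfl fun k _ => ?_
  simp [hp', ENNReal.toReal_ofReal, hr0.le, hr1.le]
end

section
/- Let λ_j = m(1-r)r^{j-1} with 0 < r < 1 and let m_j be fixed nonnegative integers for j in a finite index set S with indices j satisfying |j - log_{1/r} m| ≤ ω(m) where ω(m) → ∞ sufficiently slowly (e.g. ω(m) = (1/4)·log_{1/r} m). Then as m → ∞, the multinomial probability m!/(∏_{j∈S} m_j! · (m - ∑ m_j)!) · ∏_{j∈S}(λ_j/m)^{m_j} · (1 - ∑_{j∈S} λ_j/m)^{m - ∑ m_j} is asymptotic to ∏_{j∈S} (λ_j^{m_j}/m_j!) · exp(-∑_{j∈S} λ_j). -/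
/-!
With `N = ∑ m_j` and `x = ∑ λ_j / m` the ratio equals `(m)_N / m^N · (1 - x)^(m - N) · exp (m x)`
exactly. By Bernoulli's inequality `1 - N²/m ≤ (m)_N / m^N ≤ 1`, and
`(1 - x)^(m - N) exp (m x) = ((1 - x) eˣ)^(m - N) exp (N x)` with `1 - n x² ≤ ((1 - x) eˣ)^n ≤ 1`.
So it suffices that `N²/m`, `m x²` and `N x` tend to `0`. On the window every index is at least
`(3/4) log_{1/r} m`, so `λ_j / m ≤ m^(-3/4) / r`, and there are `O(log m)` indices: all three
quantities are `O((log m)² / √m)`.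
-/

open Finset Filter Real

open scoped Nat Topology

lemma descFactorial_div_pow_le_one (n k : ℕ) : (n.descFactorial k : ℝ) / n ^ k ≤ 1 := by
  rcases (pow_nonneg (Nat.cast_nonneg n) k : (0 : ℝ) ≤ n ^ k).eq_or_lt with h | h
  · simp [← h]
  · rw [div_le_one h]
    exact_mod_cast Nat.descFactorial_le_pow n k

lemma one_sub_sq_div_le_descFactorial_div_pow {n : ℕ} (hn : 0 < n) (k : ℕ) :
    1 - (k : ℝ) ^ 2 / n ≤ (n.descFactorial k : ℝ) / n ^ k := by
  have hn' : (0 : ℝ) < n := by exact_mod_cast hn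
  rcases le_or_gt k n with hkn | hkn
  · have hk : (k : ℝ) / n ≤ 1 := by
      rw [div_le_one hn']; exact_mod_cast hkn
    calc 1 - (k : ℝ) ^ 2 / n = 1 + k * (-(k / n)) := by ring
      _ ≤ (1 + -(k / n : ℝ)) ^ k := one_add_mul_le_pow (by linarith) k
      _ ≤ ((n + 1 - k : ℕ) / n : ℝ) ^ k := by
          gcongr
          · linarith
          · rw [Nat.cast_sub (by omega)]
            field_simp
            push_cast
            linarith
      _ ≤ (n.descFactorial k : ℝ) / n ^ k := by
          rw [div_pow]
          gcongr
          exact_mod_cast Nat.pow_sub_le_descFactorial n k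
  · have hk : (1 : ℝ) ≤ (k : ℝ) ^ 2 / n := by
      rw [le_div_iff₀ hn']
      have : (n : ℝ) + 1 ≤ k := by exact_mod_cast hkn
      nlinarith
    have : (0 : ℝ) ≤ (n.descFactorial k : ℝ) / n ^ k := by positivity
    linarith

lemma tendsto_descFactorial_div_pow {M : ℕ → ℕ}
    (hM : Tendsto (fun m : ℕ => (M m : ℝ) ^ 2 / m) atTop (𝓝 0)) :
    Tendsto (fun m : ℕ => (m.descFactorial (M m) : ℝ) / m ^ M m) atTop (𝓝 1) := by
  refine tendsto_of_tendsto_of_tendsto_of_le_of_le' (by simpa using hM.const_sub 1)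
    tendsto_const_nhds ?_ (Eventually.of_forall fun m => descFactorial_div_pow_le_one m (M m))
  filter_upwards [eventually_gt_atTop 0] with m hm
  exact one_sub_sq_div_le_descFactorial_div_pow hm (M m)

lemma one_sub_mul_sq_le_pow_one_sub_mul_exp {x : ℝ} (hx : |x| ≤ 1) (n : ℕ) :
    1 - n * x ^ 2 ≤ ((1 - x) * exp x) ^ n ∧ ((1 - x) * exp x) ^ n ≤ 1 := by
  obtain ⟨hx₁, hx₂⟩ := abs_le.mp hx
  have hsq : x ^ 2 ≤ 1 := by nlinarith
  constructor
  · calc 1 - n * x ^ 2 = 1 + n * (-x ^ 2) := by ring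
      _ ≤ (1 + -x ^ 2) ^ n := one_add_mul_le_pow (by linarith) n
      _ ≤ ((1 - x) * exp x) ^ n := by
          gcongr
          · linarith
          · calc 1 + -x ^ 2 = (1 - x) * (x + 1) := by ring
              _ ≤ (1 - x) * exp x :=
                mul_le_mul_of_nonneg_left (by linarith [add_one_le_exp x]) (by linarith)
  · apply pow_le_one₀ (by have := exp_pos x; nlinarith)
    calc (1 - x) * exp x ≤ exp (-x) * exp x := by gcongr; exact one_sub_le_exp_neg x
      _ = 1 := by rw [← exp_add, neg_add_cancel, exp_zero]

lemma tendsto_pow_one_sub_mul_exp {α : Type*} {l : Filter α} {n : α → ℕ} {x : α → ℝ}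
    (hx : ∀ᶠ a in l, |x a| ≤ 1) (hnx : Tendsto (fun a => n a * x a ^ 2) l (𝓝 0)) :
    Tendsto (fun a => ((1 - x a) * exp (x a)) ^ n a) l (𝓝 1) := by
  refine tendsto_of_tendsto_of_tendsto_of_le_of_le' (by simpa using hnx.const_sub 1)
    tendsto_const_nhds ?_ ?_ <;>
  filter_upwards [hx] with a ha
  exacts [(one_sub_mul_sq_le_pow_one_sub_mul_exp ha _).1,
    (one_sub_mul_sq_le_pow_one_sub_mul_exp ha _).2]

lemma eventually_le_of_tendsto_sq_div {M : ℕ → ℕ}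
    (hM : Tendsto (fun m : ℕ => (M m : ℝ) ^ 2 / m) atTop (𝓝 0)) : ∀ᶠ m in atTop, M m ≤ m := by
  filter_upwards [hM.eventually (gt_mem_nhds one_pos), eventually_gt_atTop 0] with m h hm
  rw [div_lt_one (by exact_mod_cast hm)] at h
  exact (Nat.le_self_pow two_ne_zero _).trans (by exact_mod_cast h.le)

theorem tendsto_descFactorial_div_pow_mul_one_sub_pow_mul_exp {M : ℕ → ℕ} {x : ℕ → ℝ}
    (hM : Tendsto (fun m : ℕ => (M m : ℝ) ^ 2 / m) atTop (𝓝 0))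
    (hx : Tendsto (fun m : ℕ => m * x m ^ 2) atTop (𝓝 0))
    (hMx : Tendsto (fun m => M m * x m) atTop (𝓝 0)) :
    Tendsto (fun m : ℕ => (m.descFactorial (M m) : ℝ) / m ^ M m * (1 - x m) ^ (m - M m) *
      exp (m * x m)) atTop (𝓝 1) := by
  have hx1 : ∀ᶠ m in atTop, |x m| ≤ 1 := by
    filter_upwards [hx.eventually (gt_mem_nhds one_pos), eventually_gt_atTop 0] with m h hm
    have hm' : (1 : ℝ) ≤ m := by exact_mod_cast hm
    rw [← sq_le_one_iff_abs_le_one]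
    nlinarith [sq_nonneg (x m)]
  have hnx : Tendsto (fun m => ((m - M m : ℕ) : ℝ) * x m ^ 2) atTop (𝓝 0) := by
    refine squeeze_zero' (Eventually.of_forall fun m => by positivity) ?_ hx
    filter_upwards with m
    gcongr
    exact_mod_cast Nat.sub_le m (M m)
  have hlim := ((tendsto_descFactorial_div_pow hM).mul (tendsto_pow_one_sub_mul_exp hx1 hnx)).mul
    ((continuous_exp.tendsto 0).comp hMx)
  rw [mul_one, exp_zero, mul_one] at hlim
  refine hlim.congr' ?_
  filter_upwards [eventually_le_of_tendsto_sq_div hM] with m hm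
  simp only [Function.comp_apply, mul_pow, ← exp_nat_mul, mul_assoc, ← exp_add]
  rw [Nat.cast_sub hm]
  ring_nf

lemma multinomial_div_poisson_eq {ι : Type*} (s : Finset ι) (k : ι → ℕ) (μ : ι → ℝ)
    (hμ : ∀ j ∈ s, μ j ≠ 0) {m : ℕ} (hm : 0 < m) (hk : ∑ j ∈ s, k j ≤ m) :
    ((m ! : ℝ) / ((∏ j ∈ s, ((k j)! : ℝ)) * ((m - ∑ j ∈ s, k j)! : ℝ)) *
        (∏ j ∈ s, (μ j / m) ^ k j) * (1 - ∑ j ∈ s, μ j / m) ^ (m - ∑ j ∈ s, k j)) /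
      ((∏ j ∈ s, μ j ^ k j / ((k j)! : ℝ)) * exp (-∑ j ∈ s, μ j)) =
    (m.descFactorial (∑ j ∈ s, k j) : ℝ) / m ^ (∑ j ∈ s, k j) *
      (1 - ∑ j ∈ s, μ j / m) ^ (m - ∑ j ∈ s, k j) * exp (m * ∑ j ∈ s, μ j / m) := by
  have hm' : (m : ℝ) ≠ 0 := by exact_mod_cast hm.ne'
  have hfact : (m ! : ℝ) = (m - ∑ j ∈ s, k j)! * m.descFactorial (∑ j ∈ s, k j) := by
    exact_mod_cast (Nat.factorial_mul_descFactorial hk).symm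
  have hμk : ∏ j ∈ s, μ j ^ k j ≠ 0 := prod_ne_zero_iff.mpr fun j hj => pow_ne_zero _ (hμ j hj)
  have hkfact : ∏ j ∈ s, ((k j)! : ℝ) ≠ 0 := prod_ne_zero_iff.mpr fun j _ => by positivity
  have hrest : ((m - ∑ j ∈ s, k j)! : ℝ) ≠ 0 := by positivity
  rw [hfact, prod_div_distrib, ← sum_div, mul_div_cancel₀ _ hm', exp_neg]
  simp only [div_pow, prod_div_distrib, prod_pow_eq_pow_sum]
  field_simp

lemma tendsto_logb_mul_rpow_neg_atTop (b : ℝ) {a : ℝ} (ha : 0 < a) :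
    Tendsto (fun y => logb b y * y ^ (-a)) atTop (𝓝 0) := by
  have h := ((isLittleO_log_rpow_atTop ha).tendsto_div_nhds_zero).div_const (log b)
  rw [zero_div] at h
  refine h.congr' ?_
  filter_upwards [eventually_gt_atTop 0] with y hy
  rw [rpow_neg hy.le, logb]
  ring

lemma pow_le_rpow_neg_of_mul_logb_le {r y a : ℝ} {n : ℕ} (hr0 : 0 < r) (hr1 : r < 1)
    (hy : 0 < y) (h : a * logb (1 / r) y ≤ n) : r ^ n ≤ y ^ (-a) := by
  calc r ^ n = r ^ (n : ℝ) := (rpow_natCast r n).symm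
    _ ≤ r ^ (a * logb (1 / r) y) := rpow_le_rpow_of_exponent_ge hr0 hr1.le h
    _ = y ^ (-a) := by
        conv_rhs => rw [← rpow_logb (b := 1 / r) (by positivity) (by simp [hr1.ne]) hy]
        rw [← rpow_mul (by positivity), one_div, inv_rpow hr0.le, ← rpow_neg hr0.le]
        ring_nf

lemma card_le_add_one_of_forall_le {s : Finset ℕ} {y : ℝ} (hy : 0 ≤ y)
    (h : ∀ j ∈ s, (j : ℝ) ≤ y) : (#s : ℝ) ≤ y + 1 := by
  have hs : s ⊆ range (⌊y⌋₊ + 1) := fun j hj =>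
    mem_range.mpr (Nat.lt_succ_of_le (Nat.le_floor (h j hj)))
  calc (#s : ℝ) ≤ (⌊y⌋₊ + 1 : ℕ) := by exact_mod_cast (card_le_card hs).trans (card_range _).le
    _ ≤ y + 1 := by push_cast; linarith [Nat.floor_le hy]

section LogScaleWindow

variable {r : ℝ} (hr0 : 0 < r) (hr1 : r < 1)
include hr0 hr1

lemma eventually_one_le_logb_inv : ∀ᶠ m : ℕ in atTop, 1 ≤ logb (1 / r) m :=
  ((tendsto_logb_atTop (one_lt_one_div hr0 hr1)).comp
    tendsto_natCast_atTop_atTop).eventually_ge_atTop 1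

variable {S : ℕ → Finset ℕ}
  (hS : ∀ m : ℕ, ∀ j ∈ S m, |(j : ℝ) - logb (1 / r) m| ≤ (1 / 4) * logb (1 / r) m)
include hS

lemma eventually_card_le : ∀ᶠ m : ℕ in atTop, (#(S m) : ℝ) ≤ 3 * logb (1 / r) m := by
  filter_upwards [eventually_one_le_logb_inv hr0 hr1] with m hL
  refine (card_le_add_one_of_forall_le (y := 5 / 4 * logb (1 / r) m) (by linarith)
    fun j hj => ?_).trans (by linarith)
  linarith [(abs_le.mp (hS m j hj)).2]

lemma eventually_sum_geometric_le : ∀ᶠ m : ℕ in atTop, ∑ j ∈ S m, (1 - r) * r ^ (j - 1) ≤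
    3 * logb (1 / r) m * ((m : ℝ) ^ (-(1 / 4 : ℝ))) ^ 3 / r := by
  filter_upwards [eventually_one_le_logb_inv hr0 hr1, eventually_card_le hr0 hr1 hS,
    eventually_gt_atTop 0] with m hL hcard hm
  have hm' : (0 : ℝ) < m := by exact_mod_cast hm
  have hterm : ∀ j ∈ S m, (1 - r) * r ^ (j - 1) ≤ ((m : ℝ) ^ (-(1 / 4 : ℝ))) ^ 3 / r := by
    intro j hj
    have hj : 3 / 4 * logb (1 / r) m ≤ j := by linarith [(abs_le.mp (hS m j hj)).1]
    have hj1 : 1 ≤ j := by exact_mod_cast (show (0 : ℝ) < j by linarith)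
    calc (1 - r) * r ^ (j - 1) ≤ r ^ j / r := by
          rw [pow_sub₀ r hr0.ne' hj1, pow_one]
          exact mul_le_of_le_one_left (by positivity) (by linarith)
      _ ≤ (m : ℝ) ^ (-(3 / 4 : ℝ)) / r := by
          gcongr
          exact pow_le_rpow_neg_of_mul_logb_le hr0 hr1 hm' hj
      _ = ((m : ℝ) ^ (-(1 / 4 : ℝ))) ^ 3 / r := by
          rw [← rpow_natCast, ← rpow_mul hm'.le]
          norm_num
  calc ∑ j ∈ S m, (1 - r) * r ^ (j - 1) ≤ #(S m) * (((m : ℝ) ^ (-(1 / 4 : ℝ))) ^ 3 / r) := by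
        simpa using sum_le_card_nsmul _ _ _ hterm
    _ ≤ _ := by
        rw [mul_div_assoc]
        gcongr

lemma tendsto_window_sums {k : ℕ → ℕ} {K : ℕ} (hk : ∀ j, k j ≤ K) :
    Tendsto (fun m : ℕ => ((∑ j ∈ S m, k j : ℕ) : ℝ) ^ 2 / m) atTop (𝓝 0) ∧
    Tendsto (fun m : ℕ => m * (∑ j ∈ S m, (1 - r) * r ^ (j - 1)) ^ 2) atTop (𝓝 0) ∧
    Tendsto (fun m : ℕ => ((∑ j ∈ S m, k j : ℕ) : ℝ) * ∑ j ∈ S m, (1 - r) * r ^ (j - 1))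
      atTop (𝓝 0) := by
  set L : ℕ → ℝ := fun m => logb (1 / r) m
  set p : ℕ → ℝ := fun m => (m : ℝ) ^ (-(1 / 4 : ℝ))
  -- all three quantities are `O((L p)²)` with `p = m^(-1/4)`, since `m p⁴ = 1`
  have hLp : ∀ c : ℝ, Tendsto (fun m => c * (L m * p m) ^ 2) atTop (𝓝 0) := fun c => by
    have := (((tendsto_logb_mul_rpow_neg_atTop (1 / r) (by norm_num : (0 : ℝ) < 1 / 4)).comp
      tendsto_natCast_atTop_atTop).pow 2).const_mul c
    rwa [zero_pow two_ne_zero, mul_zero] at this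
  have hp : ∀ᶠ m : ℕ in atTop, 0 < p m ∧ p m ≤ 1 ∧ (m : ℝ) * p m ^ 4 = 1 := by
    filter_upwards [eventually_gt_atTop 0] with m hm
    have hm' : (1 : ℝ) ≤ m := by exact_mod_cast hm
    refine ⟨by positivity, rpow_le_one_of_one_le_of_nonpos hm' (by norm_num), ?_⟩
    rw [← rpow_natCast, ← rpow_mul (by positivity)]
    norm_num
    rw [rpow_neg_one, mul_inv_cancel₀ (by positivity)]
  have hM : ∀ᶠ m : ℕ in atTop, ((∑ j ∈ S m, k j : ℕ) : ℝ) ≤ 3 * K * L m := by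
    filter_upwards [eventually_card_le hr0 hr1 hS] with m hcard
    calc ((∑ j ∈ S m, k j : ℕ) : ℝ) ≤ #(S m) * K := by
          exact_mod_cast sum_le_card_nsmul _ _ _ fun j _ => hk j
      _ ≤ 3 * K * L m := by nlinarith [(Nat.cast_nonneg K : (0 : ℝ) ≤ K)]
  have hx0 : ∀ m, 0 ≤ ∑ j ∈ S m, (1 - r) * r ^ (j - 1) := fun m =>
    sum_nonneg fun j _ => mul_nonneg (by linarith) (by positivity)
  refine ⟨squeeze_zero' (Eventually.of_forall fun m => by positivity) ?_ (hLp (9 * K ^ 2)),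
    squeeze_zero' (Eventually.of_forall fun m => by positivity) ?_ (hLp (9 / r ^ 2)),
    squeeze_zero' (Eventually.of_forall fun m => mul_nonneg (by positivity) (hx0 m)) ?_
      (hLp (9 * K / r))⟩ <;>
  filter_upwards [hp, hM, eventually_sum_geometric_le hr0 hr1 hS] with m ⟨hp0, hp1, hmp⟩ hMm hxm
  · rw [div_eq_mul_inv, inv_eq_of_mul_eq_one_right hmp]
    calc ((∑ j ∈ S m, k j : ℕ) : ℝ) ^ 2 * p m ^ 4 ≤ (3 * K * L m) ^ 2 * p m ^ 2 :=
          mul_le_mul (pow_le_pow_left₀ (Nat.cast_nonneg _) hMm 2)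
            (pow_le_pow_of_le_one hp0.le hp1 (by norm_num)) (by positivity) (by positivity)
      _ = 9 * K ^ 2 * (L m * p m) ^ 2 := by ring
  · calc (m : ℝ) * (∑ j ∈ S m, (1 - r) * r ^ (j - 1)) ^ 2 ≤ m * (3 * L m * p m ^ 3 / r) ^ 2 := by
          gcongr
      _ = 9 / r ^ 2 * (L m * p m) ^ 2 * (m * p m ^ 4) := by ring
      _ = 9 / r ^ 2 * (L m * p m) ^ 2 := by rw [hmp, mul_one]
  · have hL : 0 ≤ 3 * K * L m := (Nat.cast_nonneg _).trans hMm
    calc ((∑ j ∈ S m, k j : ℕ) : ℝ) * ∑ j ∈ S m, (1 - r) * r ^ (j - 1)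
        ≤ 3 * K * L m * (3 * L m * p m ^ 3 / r) := mul_le_mul hMm hxm (hx0 m) hL
      _ = 9 * K / r * (L m * p m) ^ 2 * p m := by ring
      _ ≤ 9 * K / r * (L m * p m) ^ 2 := mul_le_of_le_one_right (by positivity) hp1

end LogScaleWindow

/-- Poisson approximation of the multinomial probability for
multiplicities of large values.  With `λ_j = m(1-r)r^(j-1)`, bounded fixed
multiplicities `mv j`, and index sets `S m` contained in
`|j - log_{1/r} m| ≤ (1/4)·log_{1/r} m`, the multinomial probability is
asymptotic to the product of Poisson probabilities. -/
theorem stmt5 (r : ℝ) (hr0 : 0 < r) (hr1 : r < 1)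
    (S : ℕ → Finset ℕ)
    (hS : ∀ m : ℕ, ∀ j ∈ S m,
      |(j : ℝ) - Real.logb (1 / r) m| ≤ (1 / 4) * Real.logb (1 / r) m)
    (mv : ℕ → ℕ) (K : ℕ) (hmv : ∀ j, mv j ≤ K)
    (lam : ℕ → ℕ → ℝ) (hlam : ∀ m j, lam m j = (m : ℝ) * (1 - r) * r ^ (j - 1)) :
    Tendsto
      (fun m : ℕ =>
        ((m.factorial : ℝ) /
            ((∏ j ∈ S m, ((mv j).factorial : ℝ)) *
              ((m - ∑ j ∈ S m, mv j).factorial : ℝ)) *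
          (∏ j ∈ S m, (lam m j / m) ^ mv j) *
          (1 - ∑ j ∈ S m, lam m j / m) ^ (m - ∑ j ∈ S m, mv j)) /
        ((∏ j ∈ S m, lam m j ^ mv j / ((mv j).factorial : ℝ)) *
          Real.exp (-∑ j ∈ S m, lam m j)))
      atTop (nhds 1) := by
  obtain ⟨hM, hmx, hMx⟩ := tendsto_window_sums hr0 hr1 hS hmv
  have hx : ∀ᶠ m : ℕ in atTop, ∑ j ∈ S m, (1 - r) * r ^ (j - 1) = ∑ j ∈ S m, lam m j / m := by
    filter_upwards [eventually_ne_atTop 0] with m hm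
    refine sum_congr rfl fun j _ => ?_
    rw [hlam]
    field_simp
  refine (tendsto_descFactorial_div_pow_mul_one_sub_pow_mul_exp hM
    (hmx.congr' (hx.mono fun m h => by rw [h]))
    (hMx.congr' (hx.mono fun m h => by rw [h]))).congr' ?_
  filter_upwards [eventually_le_of_tendsto_sq_div hM, eventually_gt_atTop 0] with m hMm hm
  refine (multinomial_div_poisson_eq _ _ _ (fun j _ => ?_) hm hMm).symm
  rw [hlam]
  exact mul_ne_zero (mul_ne_zero (Nat.cast_ne_zero.mpr hm.ne') (sub_ne_zero.mpr hr1.ne'))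
    (pow_ne_zero _ hr0.ne')
end

section
/- Let 0 < r < 1 and for real x > 0 define f(x) = ∑_{j≥0} (1 - exp(-x r^j)). Then f(x) is finite for every x > 0, and f(x) - log_{1/r}(x) is bounded as x → ∞. -/
/-!
Take `N = ⌊log_{1/r} x⌋₊`, so that `1 ≤ x r^N < 1/r`, and split the series after `N` terms.
Since `exp (-t) ≤ 1/t`, the head is `N - ∑_{j<N} exp (-x r^j)` with
`∑_{j<N} exp (-x r^j) ≤ ∑_{j<N} r^(N-1-j) ≤ 1/(1-r)`; since `1 - exp (-t) ≤ t`, the tail is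
at most `x r^N / (1-r) < 1/(r(1-r))`. So the sum stays within a bounded distance of `N`,
which is within `1` of `log_{1/r} x`.
-/

open Real Finset

lemma Real.one_sub_exp_neg_nonneg {a : ℝ} (ha : 0 ≤ a) : 0 ≤ 1 - exp (-a) := by
  have : exp (-a) ≤ 1 := exp_le_one_iff.mpr (by linarith)
  linarith

lemma Real.one_sub_exp_neg_le (a : ℝ) : 1 - exp (-a) ≤ a := by
  linarith [one_sub_le_exp_neg a]

lemma Real.exp_neg_le_inv {t : ℝ} (ht : 0 < t) : exp (-t) ≤ t⁻¹ := by
  rw [exp_neg]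
  exact inv_anti₀ ht (by linarith [add_one_le_exp t])

section PartSizes

variable {r x : ℝ}

lemma summable_one_sub_exp_neg_mul_pow (hr0 : 0 ≤ r) (hr1 : r < 1) (hx : 0 ≤ x) :
    Summable fun j : ℕ => 1 - exp (-(x * r ^ j)) :=
  .of_nonneg_of_le (fun j => one_sub_exp_neg_nonneg (by positivity))
    (fun j => one_sub_exp_neg_le _) ((summable_geometric_of_lt_one hr0 hr1).mul_left x)

lemma tsum_one_sub_exp_neg_mul_pow_le (hr0 : 0 ≤ r) (hr1 : r < 1) (hx : 0 ≤ x) :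
    ∑' j : ℕ, (1 - exp (-(x * r ^ j))) ≤ x / (1 - r) := by
  calc ∑' j : ℕ, (1 - exp (-(x * r ^ j)))
      ≤ ∑' j : ℕ, x * r ^ j :=
        (summable_one_sub_exp_neg_mul_pow hr0 hr1 hx).tsum_le_tsum (fun j => one_sub_exp_neg_le _)
          ((summable_geometric_of_lt_one hr0 hr1).mul_left x)
    _ = x / (1 - r) := by rw [tsum_mul_left, tsum_geometric_of_lt_one hr0 hr1, div_eq_mul_inv]

lemma tsum_one_sub_exp_neg_mul_pow_eq (hr0 : 0 ≤ r) (hr1 : r < 1) (hx : 0 ≤ x) (N : ℕ) :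
    ∑' j : ℕ, (1 - exp (-(x * r ^ j))) =
      N - ∑ j ∈ range N, exp (-(x * r ^ j)) + ∑' j : ℕ, (1 - exp (-(x * r ^ N * r ^ j))) := by
  rw [← (summable_one_sub_exp_neg_mul_pow hr0 hr1 hx).sum_add_tsum_nat_add N, sum_sub_distrib]
  simp [pow_add, mul_assoc, mul_comm]

lemma sum_range_exp_neg_mul_pow_le (hr0 : 0 < r) (hr1 : r < 1) {N : ℕ} (hN : 1 ≤ x * r ^ N) :
    ∑ j ∈ range N, exp (-(x * r ^ j)) ≤ 1 / (1 - r) := by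
  have hx : 0 < x := pos_of_mul_pos_left (by linarith) (pow_nonneg hr0.le N)
  calc ∑ j ∈ range N, exp (-(x * r ^ j))
      ≤ ∑ j ∈ range N, r ^ (N - 1 - j) := by
        refine sum_le_sum fun j hj => ?_
        have hjN : j + 1 + (N - 1 - j) = N := by have := mem_range.mp hj; omega
        calc exp (-(x * r ^ j)) ≤ (x * r ^ j)⁻¹ := exp_neg_le_inv (by positivity)
          _ ≤ r ^ (N - 1 - j) := by
            rw [inv_le_iff_one_le_mul₀ (by positivity)]
            calc 1 ≤ x * r ^ N := hN
              _ ≤ x * r ^ (j + (N - 1 - j)) :=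
                mul_le_mul_of_nonneg_left (pow_le_pow_of_le_one hr0.le hr1.le (by omega)) hx.le
              _ = r ^ (N - 1 - j) * (x * r ^ j) := by ring
    _ = ∑ j ∈ range N, r ^ j := sum_range_reflect (r ^ ·) N
    _ ≤ 1 / (1 - r) := by
      simpa [Nat.Ico_zero_eq_range] using geom_sum_Ico_le_of_lt_one (m := 0) (n := N) hr0.le hr1

end PartSizes

lemma pow_floor_logb_le {b x : ℝ} (hb : 1 < b) (hx : 1 ≤ x) : b ^ ⌊logb b x⌋₊ ≤ x := by
  rw [← rpow_natCast, ← le_logb_iff_rpow_le hb (by linarith)]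
  exact Nat.floor_le (logb_nonneg hb hx)

lemma lt_pow_floor_logb_add_one {b x : ℝ} (hb : 1 < b) (hx : 0 < x) :
    x < b ^ (⌊logb b x⌋₊ + 1) := by
  rw [← rpow_natCast, ← logb_lt_iff_lt_rpow hb hx]
  exact_mod_cast Nat.lt_floor_add_one _

lemma one_le_mul_pow_floor_logb_one_div {r x : ℝ} (hr0 : 0 < r) (hr1 : r < 1) (hx : 1 ≤ x) :
    1 ≤ x * r ^ ⌊logb (1 / r) x⌋₊ := by
  have := pow_floor_logb_le (one_lt_one_div hr0 hr1) hx
  rwa [one_div_pow, div_le_iff₀ (by positivity)] at this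

lemma mul_pow_floor_logb_one_div_lt {r x : ℝ} (hr0 : 0 < r) (hr1 : r < 1) (hx : 0 < x) :
    x * r ^ ⌊logb (1 / r) x⌋₊ < 1 / r := by
  have := lt_pow_floor_logb_add_one (one_lt_one_div hr0 hr1) hx
  rwa [one_div_pow, lt_div_iff₀ (by positivity), pow_succ, ← mul_assoc, ← lt_div_iff₀ hr0] at this

/-- for `0 < r < 1`, `f(x) = ∑_{j≥0} (1 - exp(-x r^j))` is finite
for every `x > 0`, and `f(x) - log_{1/r} x` is bounded as `x → ∞`. -/
theorem stmt6 (r : ℝ) (hr0 : 0 < r) (hr1 : r < 1) :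
    (∀ x : ℝ, 0 < x → Summable (fun j : ℕ => 1 - Real.exp (-(x * r ^ j)))) ∧
    ∃ C M : ℝ, ∀ x : ℝ, M ≤ x →
      |(∑' j : ℕ, (1 - Real.exp (-(x * r ^ j)))) - Real.logb (1 / r) x| ≤ C := by
  refine ⟨fun x hx => summable_one_sub_exp_neg_mul_pow hr0.le hr1 hx.le,
    1 / (1 - r) + 1 / r / (1 - r) + 1, 1, fun x hx => ?_⟩
  have hx0 : 0 < x := by linarith
  set N := ⌊logb (1 / r) x⌋₊
  have hy1 : 1 ≤ x * r ^ N := one_le_mul_pow_floor_logb_one_div hr0 hr1 hx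
  have hN : N ≤ logb (1 / r) x := Nat.floor_le (logb_nonneg (one_lt_one_div hr0 hr1) hx)
  have hN' : logb (1 / r) x < N + 1 := Nat.lt_floor_add_one _
  have hhead : 0 ≤ ∑ j ∈ range N, exp (-(x * r ^ j)) := sum_nonneg fun j _ => (exp_pos _).le
  have hhead' := sum_range_exp_neg_mul_pow_le hr0 hr1 hy1
  have htail : 0 ≤ ∑' j : ℕ, (1 - exp (-(x * r ^ N * r ^ j))) :=
    tsum_nonneg fun j => one_sub_exp_neg_nonneg (by positivity)
  have htail' : ∑' j : ℕ, (1 - exp (-(x * r ^ N * r ^ j))) ≤ 1 / r / (1 - r) :=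
    (tsum_one_sub_exp_neg_mul_pow_le hr0.le hr1 (by positivity)).trans <|
      div_le_div_of_nonneg_right (mul_pow_floor_logb_one_div_lt hr0 hr1 hx0).le (by linarith)
  rw [tsum_one_sub_exp_neg_mul_pow_eq hr0.le hr1 hx0.le N, abs_le]
  constructor <;> linarith
end

section
/- Suppose a class of compositions C satisfies: the number of compositions of n in C is at most K r^{-n} for all n, and at least K' r^{-n} for all large n, with constants K, K' > 0 and 0 < r < 1. If every composition of n containing a specified subcomposition s (with part sum Σ(s) = σ) can be decomposed as a pair of structures of total weight n - σ each counted by a class with at most K r^{-ℓ} objects of weight ℓ, then the probability that a uniformly random composition of n in C contains s is at most B·n·r^{σ} for some constant B depending only on C. -/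
open Filter Finset

/-!
Each of the `n - σ + 1` ways to split the weight `n - σ` between the two families contributes
at most `K² r^(σ-n)` pairs, while there are at least `K' r^(-n)` compositions of `n` for large `n`.
Since `n - σ + 1 ≤ 2n`, the ratio is at most `(2K²/K') n r^σ`.
-/

theorem sum_range_mul_le_of_le_mul_pow {f g : ℕ → ℝ} {A B c : ℝ} (m : ℕ)
    (hf0 : ∀ a, 0 ≤ f a) (hg0 : ∀ b, 0 ≤ g b)
    (hf : ∀ a, f a ≤ A * c ^ a) (hg : ∀ b, g b ≤ B * c ^ b) :
    ∑ a ∈ range (m + 1), f a * g (m - a) ≤ (m + 1) * (A * B * c ^ m) := by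
  calc ∑ a ∈ range (m + 1), f a * g (m - a)
      ≤ ∑ _a ∈ range (m + 1), A * B * c ^ m := by
        refine sum_le_sum fun a ha => ?_
        have ham : a + (m - a) = m := Nat.add_sub_cancel' (Nat.lt_succ_iff.mp (mem_range.mp ha))
        calc f a * g (m - a) ≤ (A * c ^ a) * (B * c ^ (m - a)) :=
              mul_le_mul (hf a) (hg _) (hg0 _) ((hf0 a).trans (hf a))
          _ = A * B * c ^ m := by rw [← ham, pow_add, Nat.add_sub_cancel_left]; ring
    _ = (m + 1) * (A * B * c ^ m) := by simp

theorem one_div_pow_sub {r : ℝ} (hr : r ≠ 0) {σ n : ℕ} (h : σ ≤ n) :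
    (1 / r) ^ (n - σ) = r ^ σ * (1 / r) ^ n := by
  rw [pow_sub₀ _ (one_div_ne_zero hr) h, one_div, inv_pow, inv_pow, inv_inv, mul_comm]

theorem stmt11_general (r K K' : ℝ) (hr0 : 0 < r) (hK : 0 < K) (hK' : 0 < K')
    (cnt Ncon f g : ℕ → ℕ) (σ : ℕ)
    (hlb : ∃ N0, ∀ n ≥ N0, K' * (1 / r) ^ n ≤ (cnt n : ℝ))
    (hf : ∀ ℓ, (f ℓ : ℝ) ≤ K * (1 / r) ^ ℓ)
    (hg : ∀ ℓ, (g ℓ : ℝ) ≤ K * (1 / r) ^ ℓ)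
    (hdec : ∀ n, σ ≤ n →
      Ncon n ≤ ∑ a ∈ Finset.range (n - σ + 1), f a * g (n - σ - a)) :
    ∃ B : ℝ, 0 < B ∧ ∀ᶠ n : ℕ in atTop,
      (Ncon n : ℝ) / (cnt n : ℝ) ≤ B * n * r ^ σ := by
  obtain ⟨N0, hN0⟩ := hlb
  refine ⟨2 * K ^ 2 / K', by positivity, ?_⟩
  filter_upwards [eventually_ge_atTop (max N0 (σ + 1))] with n hn
  have hN0n : N0 ≤ n := le_of_max_le_left hn
  have hσn : σ + 1 ≤ n := le_of_max_le_right hn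
  have hcnt_pos : (0 : ℝ) < cnt n := lt_of_lt_of_le (by positivity) (hN0 n hN0n)
  have hpairs : (Ncon n : ℝ) ≤ ((n - σ : ℕ) + 1) * (K * K * (1 / r) ^ (n - σ)) := by
    have := sum_range_mul_le_of_le_mul_pow (n - σ) (fun a => (f a).cast_nonneg)
      (fun b => (g b).cast_nonneg) hf hg
    exact_mod_cast (Nat.cast_le.mpr (hdec n (by omega))).trans (by push_cast; exact this)
  have hlen : ((n - σ : ℕ) : ℝ) + 1 ≤ 2 * n := by
    exact_mod_cast (by omega : n - σ + 1 ≤ 2 * n)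
  rw [div_le_iff₀ hcnt_pos]
  calc (Ncon n : ℝ) ≤ ((n - σ : ℕ) + 1) * (K * K * (1 / r) ^ (n - σ)) := hpairs
    _ ≤ (2 * n) * (K * K * (1 / r) ^ (n - σ)) := by gcongr
    _ = (2 * K ^ 2 / K' * n * r ^ σ) * (K' * (1 / r) ^ n) := by
        rw [one_div_pow_sub hr0.ne' (by omega)]
        field_simp
    _ ≤ (2 * K ^ 2 / K' * n * r ^ σ) * cnt n := by gcongr; exact hN0 n hN0n

/-- if a class has between `K' r^(-n)` (for large `n`) and
`K r^(-n)` compositions of `n`, and the compositions of `n` containing a fixed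
subcomposition of sum `σ` inject into pairs of objects of total weight `n - σ`
from families with at most `K r^(-ℓ)` objects of weight `ℓ`, then the
probability that a random composition of `n` contains the subcomposition is at
most `B n r^σ` for some constant `B`. -/
theorem stmt11 (r K K' : ℝ) (hr0 : 0 < r) (hr1 : r < 1) (hK : 0 < K) (hK' : 0 < K')
    (cnt Ncon f g : ℕ → ℕ) (σ : ℕ)
    (hub : ∀ n, (cnt n : ℝ) ≤ K * (1 / r) ^ n)
    (hlb : ∃ N0, ∀ n ≥ N0, K' * (1 / r) ^ n ≤ (cnt n : ℝ))
    (hf : ∀ ℓ, (f ℓ : ℝ) ≤ K * (1 / r) ^ ℓ)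
    (hg : ∀ ℓ, (g ℓ : ℝ) ≤ K * (1 / r) ^ ℓ)
    (hdec : ∀ n, σ ≤ n →
      Ncon n ≤ ∑ a ∈ Finset.range (n - σ + 1), f a * g (n - σ - a)) :
    ∃ B : ℝ, 0 < B ∧ ∀ᶠ n : ℕ in atTop,
      (Ncon n : ℝ) / (cnt n : ℝ) ≤ B * n * r ^ σ :=
  stmt11_general r K K' hr0 hK hK' cnt Ncon f g σ hlb hf hg hdec
end
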